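/- arXiv:1007.0787 — 3 statements merged into one kernel-verified Lean document; each statement's English description precedes it below -/
import Mathlib

section
/- Let R be a commutative ring and let a, b ∈ R satisfy a·b = 2. Let A = R[X]/(X² − a·X) and let x denote the image of X in A. Then the R-algebra homomorphisms Δ : A → A ⊗_R A determined by x ↦ x ⊗ 1 + 1 ⊗ x − b·(x ⊗ x), ε : A → R determined by x ↦ 0, and σ : A → A determined by x ↦ x are well defined and make A into a Hopf algebra over R (Δ is coassociative with counit ε, Δ is cocommutative, and σ is an antipode for this bialgebra structure). -/
/-!
An algebra map out of `A = R[X]/(X² - aX)` is the choice of an element `t` with `t² = a t`, and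
is determined by it. `Δ x = x ⊗ 1 + 1 ⊗ x - b x ⊗ x` qualifies because `(ab)² - 4ab + 2 = -ab`
when `ab = 2`; each Hopf axiom is then an identity between algebra maps out of `A`, checked on
`x` using the formal group law `X + Y - bXY`. The antipode is the identity, as
`x + x - b x² = (2 - ab) x = 0`.
-/

open TensorProduct Polynomial

namespace TateOort

variable {R : Type*} [CommRing R]

abbrev CoordRing (a : R) : Type _ := AdjoinRoot (X ^ 2 - C a * X : R[X])

theorem aeval_X_sq_sub_C_mul_X_eq_zero_iff {A : Type*} [CommRing A] [Algebra R A] (a : R)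
    (t : A) : aeval t (X ^ 2 - C a * X) = 0 ↔ t * t = a • t := by
  simp [sq, sub_eq_zero, Algebra.smul_def]

theorem root_mul_root (a : R) :
    AdjoinRoot.root (X ^ 2 - C a * X) * AdjoinRoot.root _ = a • AdjoinRoot.root _ :=
  (aeval_X_sq_sub_C_mul_X_eq_zero_iff a _).1 ((AdjoinRoot.aeval_eq _).trans AdjoinRoot.mk_self)

def comulElem {A : Type*} [CommRing A] [Algebra R A] (b : R) (x : A) : A ⊗[R] A :=
  x ⊗ₜ 1 + 1 ⊗ₜ x - b • (x ⊗ₜ x)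

theorem comulElem_mul_self {A : Type*} [CommRing A] [Algebra R A] {a b : R} (hab : a * b = 2)
    {x : A} (hx : x * x = a • x) : comulElem b x * comulElem b x = a • comulElem b x := by
  simp only [comulElem, mul_sub, sub_mul, mul_add, add_mul, Algebra.TensorProduct.tmul_mul_tmul,
    mul_smul_comm, smul_mul_assoc, smul_smul, one_mul, mul_one, hx, ← smul_tmul', tmul_smul,
    smul_sub, smul_add]
  match_scalars <;> grind

variable {a b : R}

noncomputable def comul (hab : a * b = 2) : CoordRing a →ₐ[R] CoordRing a ⊗[R] CoordRing a :=
  AdjoinRoot.liftAlgHom _ (Algebra.ofId R _) (comulElem b (AdjoinRoot.root _))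
    ((aeval_X_sq_sub_C_mul_X_eq_zero_iff a _).2 (comulElem_mul_self hab (root_mul_root a)))

variable (a) in
noncomputable def counit : CoordRing a →ₐ[R] R :=
  AdjoinRoot.liftAlgHom _ (Algebra.ofId R R) 0
    ((aeval_X_sq_sub_C_mul_X_eq_zero_iff a _).2 (by simp))

@[simp]
theorem comul_root (hab : a * b = 2) :
    comul hab (AdjoinRoot.root _) = comulElem b (AdjoinRoot.root _) :=
  AdjoinRoot.liftAlgHom_root ..

@[simp]
theorem counit_root : counit a (AdjoinRoot.root _) = 0 :=
  AdjoinRoot.liftAlgHom_root ..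

theorem assoc_comp_map_comul_comp_comul (hab : a * b = 2) :
    (Algebra.TensorProduct.assoc R R R _ _ _).toAlgHom.comp
        ((Algebra.TensorProduct.map (comul hab) (AlgHom.id R _)).comp (comul hab)) =
      (Algebra.TensorProduct.map (AlgHom.id R _) (comul hab)).comp (comul hab) := by
  ext
  simp only [AlgHom.comp_apply, AlgEquiv.toAlgHom_apply, comul_root, comulElem, map_sub, map_add,
    map_smul, map_one, Algebra.TensorProduct.map_tmul, AlgHom.id_apply, tmul_sub, sub_tmul,
    tmul_add, add_tmul, tmul_smul, ← smul_tmul', Algebra.TensorProduct.one_def,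
    Algebra.TensorProduct.assoc_tmul]
  module

theorem lid_comp_map_counit_comp_comul (hab : a * b = 2) :
    (Algebra.TensorProduct.lid R _).toAlgHom.comp
        ((Algebra.TensorProduct.map (counit a) (AlgHom.id R _)).comp (comul hab)) =
      AlgHom.id R _ := by
  ext
  simp [comulElem, Algebra.TensorProduct.map_tmul]

theorem rid_comp_map_counit_comp_comul (hab : a * b = 2) :
    (Algebra.TensorProduct.rid R R _).toAlgHom.comp
        ((Algebra.TensorProduct.map (AlgHom.id R _) (counit a)).comp (comul hab)) =
      AlgHom.id R _ := by
  ext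
  simp [comulElem, Algebra.TensorProduct.map_tmul]

theorem comm_comp_comul (hab : a * b = 2) :
    (Algebra.TensorProduct.comm R _ _).toAlgHom.comp (comul hab) = comul hab := by
  ext
  simp only [AlgHom.comp_apply, AlgEquiv.toAlgHom_apply, comul_root, comulElem, map_sub, map_add,
    map_smul, Algebra.TensorProduct.comm_tmul]
  abel

theorem lmul'_comp_comul (hab : a * b = 2) :
    (Algebra.TensorProduct.lmul' R).comp (comul hab) = (Algebra.ofId R _).comp (counit a) := by
  ext
  simp only [AlgHom.comp_apply, comul_root, comulElem, counit_root, map_zero, map_sub, map_add,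
    map_smul, Algebra.TensorProduct.lmul'_apply_tmul, one_mul, mul_one, root_mul_root, smul_smul]
  rw [mul_comm b a, hab, two_smul, sub_self]

end TateOort

/-- **The Hopf algebra of the Tate–Oort group scheme `G_{a,b}`.**
Let `R` be a commutative ring and `a b ∈ R` with `a * b = 2`, and let
`A = R[X]/(X² - a·X)` with `x` the class of `X`.  Then there are `R`-algebra
homomorphisms `Δ : A → A ⊗[R] A` with `Δ x = x ⊗ 1 + 1 ⊗ x - b·(x ⊗ x)`,
`ε : A → R` with `ε x = 0`, and `σ : A → A` with `σ x = x`, and they make `A`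
a (cocommutative) Hopf algebra over `R`: `Δ` is coassociative, `ε` is a
two-sided counit, `Δ` is cocommutative, and `σ` is a (two-sided) antipode. -/
theorem stmt_1 (R : Type*) [CommRing R] (a b : R) (hab : a * b = 2) :
    ∃ (Δ : AdjoinRoot (Polynomial.X ^ 2 - Polynomial.C a * Polynomial.X) →ₐ[R]
          (AdjoinRoot (Polynomial.X ^ 2 - Polynomial.C a * Polynomial.X) ⊗[R]
            AdjoinRoot (Polynomial.X ^ 2 - Polynomial.C a * Polynomial.X)))
      (ε : AdjoinRoot (Polynomial.X ^ 2 - Polynomial.C a * Polynomial.X) →ₐ[R] R)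
      (σ : AdjoinRoot (Polynomial.X ^ 2 - Polynomial.C a * Polynomial.X) →ₐ[R]
          AdjoinRoot (Polynomial.X ^ 2 - Polynomial.C a * Polynomial.X)),
      -- the comultiplication is determined by `x ↦ x ⊗ 1 + 1 ⊗ x - b·(x ⊗ x)`
      Δ (AdjoinRoot.root _) =
          AdjoinRoot.root _ ⊗ₜ[R] 1 + 1 ⊗ₜ[R] AdjoinRoot.root _
            - b • (AdjoinRoot.root _ ⊗ₜ[R] AdjoinRoot.root _) ∧
      -- the counit is determined by `x ↦ 0`
      ε (AdjoinRoot.root _) = 0 ∧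
      -- the antipode is determined by `x ↦ x`
      σ (AdjoinRoot.root _) = AdjoinRoot.root _ ∧
      -- coassociativity of `Δ`
      (∀ z, (Algebra.TensorProduct.assoc R R R _ _ _)
            ((Algebra.TensorProduct.map Δ (AlgHom.id R _)) (Δ z))
          = (Algebra.TensorProduct.map (AlgHom.id R _) Δ) (Δ z)) ∧
      -- `ε` is a left counit for `Δ`
      (∀ z, (Algebra.TensorProduct.lid R _)
            ((Algebra.TensorProduct.map ε (AlgHom.id R _)) (Δ z)) = z) ∧
      -- `ε` is a right counit for `Δ`
      (∀ z, (Algebra.TensorProduct.rid R R _)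
            ((Algebra.TensorProduct.map (AlgHom.id R _) ε) (Δ z)) = z) ∧
      -- cocommutativity of `Δ`
      (∀ z, (Algebra.TensorProduct.comm R _ _) (Δ z) = Δ z) ∧
      -- `σ` is a left antipode
      (∀ z, (Algebra.TensorProduct.lmul' R)
            ((Algebra.TensorProduct.map σ (AlgHom.id R _)) (Δ z))
          = algebraMap R _ (ε z)) ∧
      -- `σ` is a right antipode
      (∀ z, (Algebra.TensorProduct.lmul' R)
            ((Algebra.TensorProduct.map (AlgHom.id R _) σ) (Δ z))
          = algebraMap R _ (ε z)) := by
  have antipode (z : TateOort.CoordRing a) :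
      Algebra.TensorProduct.lmul' R
          (Algebra.TensorProduct.map (AlgHom.id R _) (AlgHom.id R _) (TateOort.comul hab z)) =
        algebraMap R _ (TateOort.counit a z) := by
    rw [Algebra.TensorProduct.map_id]
    exact congr($(TateOort.lmul'_comp_comul hab) z)
  exact ⟨TateOort.comul hab, TateOort.counit a, AlgHom.id R _,
    TateOort.comul_root hab, TateOort.counit_root, rfl,
    fun z => congr($(TateOort.assoc_comp_map_comul_comp_comul hab) z),
    fun z => congr($(TateOort.lid_comp_map_counit_comp_comul hab) z),
    fun z => congr($(TateOort.rid_comp_map_counit_comp_comul hab) z),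
    fun z => congr($(TateOort.comm_comp_comul hab) z), antipode, antipode⟩
end

section
/- Let R be a commutative ring, let a, b ∈ R satisfy a·b = 2, and let S be a commutative R-algebra. Define ρ(s) to be the 2×2 matrix [[1, s], [0, 1 − b·s]] over S. Then for all s, t ∈ G_{a,b}(S) = {s ∈ S | s² = a·s} one has ρ(s ⊕ t) = ρ(s)·ρ(t) where s ⊕ t = s + t − b·s·t, ρ(0) is the identity matrix, ρ(s)·ρ(s) is the identity matrix (so each ρ(s) is invertible), and ρ is injective. Hence ρ is an injective group homomorphism from the group G_{a,b}(S) to GL₂(S); it is the regular representation of G_{a,b}. -/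
/-! On `s² = a·s` with `a·b = 2` one has `b·s² = 2·s`, which is exactly what makes the
upper-triangular matrix `!![1, s; 0, 1 - b·s]` an involution; the multiplicativity and
injectivity of `s ↦ !![1, s; 0, 1 - b·s]` hold for every `s` in any commutative ring. -/

namespace TateOort

variable {S : Type*} [CommRing S]

def regularRep (b s : S) : Matrix (Fin 2) (Fin 2) S :=
  !![1, s; 0, 1 - b * s]

theorem regularRep_add_sub_mul (b s t : S) :
    regularRep b (s + t - b * s * t) = regularRep b s * regularRep b t := by
  rw [regularRep, regularRep, regularRep, Matrix.mul_fin_two]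
  ext i j
  fin_cases i <;> fin_cases j <;> simp <;> ring

theorem regularRep_zero (b : S) : regularRep b 0 = 1 := by
  simp only [regularRep, mul_zero, sub_zero, Matrix.one_fin_two]

theorem regularRep_mul_self {a b s : S} (hab : a * b = 2) (hs : s ^ 2 = a * s) :
    regularRep b s * regularRep b s = 1 := by
  have hbs : b * s ^ 2 = 2 * s := by
    rw [hs, ← mul_assoc, mul_comm b a, hab]
  rw [regularRep, Matrix.mul_fin_two, Matrix.one_fin_two]
  ext i j
  fin_cases i <;> fin_cases j <;> simp
  · linear_combination -hbs
  · linear_combination b * hbs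

theorem regularRep_injective (b : S) : Function.Injective (regularRep b) :=
  fun s t h => by simpa [regularRep] using congrFun (congrFun h 0) 1

end TateOort

/-- **The regular representation of the Tate–Oort group.**
Let `R` be a commutative ring, `a b ∈ R` with `a * b = 2`, and `S` a commutative
`R`-algebra.  For `s ∈ S` let `ρ s = !![1, s; 0, 1 - b·s]`.  Then on
`G_{a,b}(S) = {s | s² = a·s}`, `ρ` turns the group law `s ⊕ t = s + t - b·s·t`
into matrix multiplication, `ρ 0 = 1`, `ρ s · ρ s = 1`, and `ρ` is injective;
hence `ρ` is an injective group homomorphism `G_{a,b}(S) → GL₂(S)`. -/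
theorem stmt_2 (R S : Type*) [CommRing R] [CommRing S] [Algebra R S]
    (a b : R) (hab : a * b = 2) :
    let a' : S := algebraMap R S a
    let b' : S := algebraMap R S b
    let ρ : S → Matrix (Fin 2) (Fin 2) S := fun s => !![1, s; 0, 1 - b' * s]
    -- `ρ` transforms the group law into matrix multiplication
    (∀ s t : S, s ^ 2 = a' * s → t ^ 2 = a' * t →
        ρ (s + t - b' * s * t) = ρ s * ρ t) ∧
    -- `ρ 0` is the identity matrix
    ρ 0 = 1 ∧
    -- each `ρ s` squares to the identity, so is invertible
    (∀ s : S, s ^ 2 = a' * s → ρ s * ρ s = 1) ∧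
    -- `ρ` is injective on `G_{a,b}(S)`
    (∀ s t : S, s ^ 2 = a' * s → t ^ 2 = a' * t → ρ s = ρ t → s = t) := by
  intro a' b' ρ
  have hab' : a' * b' = 2 := by
    simp only [a', b', ← map_mul, hab, map_ofNat]
  exact ⟨fun s t _ _ => TateOort.regularRep_add_sub_mul b' s t, TateOort.regularRep_zero b',
    fun s hs => TateOort.regularRep_mul_self hab' hs,
    fun s t _ _ h => TateOort.regularRep_injective b' h⟩
end

section
/- Let R be a commutative ring, let a, b ∈ R satisfy a·b = 2, let S be a commutative R-algebra, and let s ∈ S satisfy s² = a·s. Let σ_s be the S-algebra endomorphism of T = S[x₁, y₁, …, xₙ, yₙ] determined by σ_s(x_i) = x_i and σ_s(y_i) = s·x_i + (1 − b·s)·y_i. Then for all indices i, j the quadrics x_i·x_j and y_i² − a·x_i·y_i are fixed by σ_s, i.e. σ_s(x_i·x_j) = x_i·x_j and σ_s(y_i² − a·x_i·y_i) = y_i² − a·x_i·y_i. -/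
open MvPolynomial

/-! The substitution fixes each `xᵢ`, hence each `xᵢ·xⱼ`. Substituting `y ↦ s·x + (1 - b·s)·y` into
`y² - a·x·y` gives `x²`-coefficient `s² - a·s = 0`, `y²`-coefficient `(1 - b·s)² = 1`, and
`x·y`-coefficient `(2·s - a)(1 - b·s) = -a`, the last two because `a·b = 2` and `b·s² = 2·s`. -/

section QuadricInvariance

variable {A : Type*} [CommRing A] {a b s : A}

theorem one_sub_mul_sq_eq_one (hab : a * b = 2) (hs : s ^ 2 = a * s) : (1 - b * s) ^ 2 = 1 := by
  linear_combination b ^ 2 * hs + b * s * hab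

theorem sq_sub_mul_mul_eq_of_subst (hab : a * b = 2) (hs : s ^ 2 = a * s) (x y : A) :
    (s * x + (1 - b * s) * y) ^ 2 - a * x * (s * x + (1 - b * s) * y) = y ^ 2 - a * x * y := by
  linear_combination (x ^ 2 - 2 * b * x * y) * hs + y ^ 2 * one_sub_mul_sq_eq_one hab hs
    - s * x * y * hab

end QuadricInvariance

/-- **Invariance of the quadrics `xᵢ·xⱼ` and `yᵢ² - a·xᵢ·yᵢ`.**
Variables of `S[x₁,y₁,…,xₙ,yₙ]` are indexed by `Fin n × Bool`, with
`X (i, false) = xᵢ` and `X (i, true) = yᵢ`.  For `s ∈ S` with `s² = a·s`, the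
substitution `σ s` (fixing each `xᵢ` and sending `yᵢ ↦ s·xᵢ + (1 - b·s)·yᵢ`)
fixes the quadrics `xᵢ·xⱼ` and `yᵢ² - a·xᵢ·yᵢ` for all `i, j`. -/
theorem stmt_4 (R S : Type*) [CommRing R] [CommRing S] [Algebra R S] (n : ℕ)
    (a b : R) (hab : a * b = 2)
    (s : S) (hs : s ^ 2 = algebraMap R S a * s) :
    let a' : S := algebraMap R S a
    let b' : S := algebraMap R S b
    let σ : MvPolynomial (Fin n × Bool) S →ₐ[S] MvPolynomial (Fin n × Bool) S :=
      aeval (fun v : Fin n × Bool =>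
        if v.2 then C s * X (v.1, false) + C (1 - b' * s) * X (v.1, true)
        else X v)
    ∀ i j : Fin n,
      σ (X (i, false) * X (j, false)) = X (i, false) * X (j, false) ∧
      σ (X (i, true) ^ 2 - C a' * X (i, false) * X (i, true))
        = X (i, true) ^ 2 - C a' * X (i, false) * X (i, true) := by
  intro a' b' σ i j
  have hab' : (C a' : MvPolynomial (Fin n × Bool) S) * C b' = 2 := by
    rw [← map_mul, ← map_mul, hab, map_ofNat, map_ofNat]
  have hs' : (C s : MvPolynomial (Fin n × Bool) S) ^ 2 = C a' * C s := by
    rw [← map_pow, ← map_mul, hs]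
  refine ⟨by simp [σ], ?_⟩
  simp only [σ, map_sub, map_pow, map_mul, aeval_X, aeval_C, algebraMap_eq, if_true,
    Bool.false_eq_true, if_false, map_one]
  exact sq_sub_mul_mul_eq_of_subst hab' hs' _ _
end
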